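/- Fix λ ∈ (0,1). With σ_j(r) and the relation ~ as defined in the context, one has σ_0(r) ~ (1/(2π)) (r^λ + r^{1−λ})/(1 + r); that is, there exists ε₀ > 0 such that for every ε ∈ (0, ε₀), the quotient (σ_0(r) − (1/(2π))(r^λ + r^{1−λ})/(1+r)) / ((1/(2π))(r^λ + r^{1−λ})/(1+r) · r^ε) tends to 0 as r → 0+. -/

import Mathlib

open Filter Topology

/-- `βₙ(r) = 2π(r^{(1−λ)(2n+1)} + r^{−λ(2n+1)})`, real powers of the positive real `r`. -/
noncomputable def beta (lam r : ℝ) (n : ℤ) : ℝ :=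
  2 * Real.pi * (r ^ ((1 - lam) * (2 * (n : ℝ) + 1)) + r ^ (-lam * (2 * (n : ℝ) + 1)))

/-- `σ_j(r) = ∑_{n∈ℤ} n^j/βₙ(r)`. -/
noncomputable def sig (lam : ℝ) (j : ℕ) (r : ℝ) : ℝ := ∑' n : ℤ, (n : ℝ) ^ j / beta lam r n

/-- `φ ~ ψ`: there is `ε₀ > 0` such that for all `ε ∈ (0, ε₀)`,
`(φ(r) − ψ(r))/(ψ(r) rᵉ) → 0` as `r → 0⁺` (within `(0,1)`). -/
def SimRel (φ ψ : ℝ → ℝ) : Prop :=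
  ∃ ε₀ > (0 : ℝ), ∀ ε ∈ Set.Ioo (0 : ℝ) ε₀,
    Tendsto (fun r : ℝ => (φ r - ψ r) / (ψ r * r ^ ε))
      (nhdsWithin 0 (Set.Ioo (0 : ℝ) 1)) (nhds 0)

lemma beta_pos {lam r : ℝ} (hr : 0 < r) (n : ℤ) : 0 < beta lam r n := by
  unfold beta
  have h1 := Real.rpow_pos_of_pos hr ((1 - lam) * (2 * (n : ℝ) + 1))
  have h2 := Real.rpow_pos_of_pos hr (-lam * (2 * (n : ℝ) + 1))
  positivity

lemma one_div_aux {lam r : ℝ} (hr : 0 < r) (n : ℤ) {c : ℝ}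
    (hc : 2 * Real.pi * r ^ (-c) ≤ beta lam r n) :
    1 / beta lam r n ≤ 1 / (2 * Real.pi) * r ^ c := by
  have h2 : (0:ℝ) < 2 * Real.pi * r ^ (-c) := by
    have := Real.rpow_pos_of_pos hr (-c)
    positivity
  calc 1 / beta lam r n ≤ 1 / (2 * Real.pi * r ^ (-c)) :=
        one_div_le_one_div_of_le h2 hc
    _ = 1 / (2 * Real.pi) * r ^ c := by
        rw [Real.rpow_neg hr.le, one_div, mul_inv, inv_inv, one_div]

lemma one_div_beta_le₁ {lam r : ℝ} (hr : 0 < r) (n : ℤ) :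
    1 / beta lam r n ≤ 1 / (2 * Real.pi) * r ^ (lam * (2 * (n:ℝ) + 1)) := by
  apply one_div_aux hr n
  unfold beta
  have h1 := (Real.rpow_pos_of_pos hr ((1 - lam) * (2 * (n : ℝ) + 1))).le
  have : -(lam * (2 * (n:ℝ) + 1)) = -lam * (2 * (n:ℝ) + 1) := by ring
  rw [this]
  nlinarith [Real.pi_pos]

lemma one_div_beta_le₂ {lam r : ℝ} (hr : 0 < r) (n : ℤ) :
    1 / beta lam r n ≤ 1 / (2 * Real.pi) * r ^ (-((1 - lam) * (2 * (n:ℝ) + 1))) := by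
  apply one_div_aux hr n
  unfold beta
  have h2 := (Real.rpow_pos_of_pos hr (-lam * (2 * (n : ℝ) + 1))).le
  rw [neg_neg]
  nlinarith [Real.pi_pos]

lemma rpow_split {r : ℝ} (hr : 0 < r) (a c : ℝ) (k : ℕ) :
    r ^ (a + 2 * c * (k:ℝ)) = r ^ a * (r ^ (2 * c)) ^ k := by
  rw [Real.rpow_add hr, Real.rpow_mul hr.le (2*c) (k:ℝ), Real.rpow_natCast]

lemma geom_bound {r : ℝ} (hr : r ∈ Set.Ioo (0:ℝ) 1) {c a : ℝ} (hc : 0 < c) {f : ℕ → ℝ}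
    (h0 : ∀ k, 0 ≤ f k) (hle : ∀ k, f k ≤ 1 / (2 * Real.pi) * (r ^ a * (r ^ (2 * c)) ^ k)) :
    Summable f ∧ ∑' k, f k ≤ 1 / (2 * Real.pi) * r ^ a * (1 - r ^ (2 * c))⁻¹ := by
  obtain ⟨hr0, hr1⟩ := hr
  have hq0 : 0 ≤ r ^ (2 * c) := (Real.rpow_pos_of_pos hr0 _).le
  have hq1 : r ^ (2 * c) < 1 := Real.rpow_lt_one hr0.le hr1 (by positivity)
  have hg : Summable (fun k : ℕ => 1 / (2 * Real.pi) * (r ^ a * (r ^ (2 * c)) ^ k)) := by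
    exact ((summable_geometric_of_lt_one hq0 hq1).mul_left _).mul_left _
  have hf : Summable f := Summable.of_nonneg_of_le h0 hle hg
  refine ⟨hf, le_trans (hf.tsum_le_tsum hle hg) ?_⟩
  rw [tsum_mul_left, tsum_mul_left, tsum_geometric_of_lt_one hq0 hq1, mul_assoc]

lemma head_eq {lam r : ℝ} (hr : r ∈ Set.Ioo (0:ℝ) 1) :
    1 / beta lam r 0 + 1 / beta lam r (-1)
      = 1 / (2 * Real.pi) * (r ^ lam + r ^ (1 - lam)) / (1 + r) := by
  obtain ⟨hr0, hr1⟩ := hr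
  have hA : (0:ℝ) < r ^ lam := Real.rpow_pos_of_pos hr0 _
  have hpi := Real.pi_pos
  have h1r : (0:ℝ) < 1 + r := by linarith
  have hsub : r ^ (1 - lam) = r / r ^ lam := by
    rw [Real.rpow_sub hr0, Real.rpow_one]
  have f0 : beta lam r 0 = 2 * Real.pi * (1 + r) / r ^ lam := by
    unfold beta
    rw [show (1 - lam) * (2 * ((0:ℤ):ℝ) + 1) = 1 - lam by push_cast; ring,
      show -lam * (2 * ((0:ℤ):ℝ) + 1) = -lam by push_cast; ring,
      hsub, Real.rpow_neg hr0.le]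
    field_simp
    ring
  have f1 : beta lam r (-1) = 2 * Real.pi * (1 + r) * r ^ lam / r := by
    unfold beta
    rw [show (1 - lam) * (2 * ((-1:ℤ):ℝ) + 1) = lam - 1 by push_cast; ring,
      show -lam * (2 * ((-1:ℤ):ℝ) + 1) = lam by push_cast; ring,
      Real.rpow_sub hr0, Real.rpow_one]
    field_simp
  rw [f0, f1, hsub]
  field_simp

lemma sandwich {lam r : ℝ} (hlam : lam ∈ Set.Ioo (0:ℝ) 1) (hr : r ∈ Set.Ioo (0:ℝ) 1) :
    0 ≤ sig lam 0 r - 1 / (2 * Real.pi) * (r ^ lam + r ^ (1 - lam)) / (1 + r) ∧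
      sig lam 0 r - 1 / (2 * Real.pi) * (r ^ lam + r ^ (1 - lam)) / (1 + r) ≤
        1 / (2 * Real.pi) * r ^ (3 * lam) * (1 - r ^ (2 * lam))⁻¹
          + 1 / (2 * Real.pi) * r ^ (3 * (1 - lam)) * (1 - r ^ (2 * (1 - lam)))⁻¹ := by
  obtain ⟨hr0, hr1⟩ := hr
  obtain ⟨hl0, hl1⟩ := hlam
  have hl0' : 0 < 1 - lam := by linarith
  have hnn : ∀ n : ℤ, 0 ≤ 1 / beta lam r n := fun n => by
    have := beta_pos (lam := lam) hr0 n; positivity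
  -- summability of the nonnegative-index side
  have hpos := geom_bound ⟨hr0, hr1⟩ hl0 (f := fun k : ℕ => 1 / beta lam r (k : ℤ))
    (fun k => hnn _) (fun k => by
      calc 1 / beta lam r (k : ℤ)
          ≤ 1 / (2 * Real.pi) * r ^ (lam * (2 * ((k:ℤ):ℝ) + 1)) := one_div_beta_le₁ hr0 _
        _ = 1 / (2 * Real.pi) * (r ^ lam * (r ^ (2 * lam)) ^ k) := by
            rw [show lam * (2 * ((k:ℤ):ℝ) + 1) = lam + 2 * lam * (k:ℝ) by push_cast; ring,
              rpow_split hr0])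
  have hneg := geom_bound ⟨hr0, hr1⟩ hl0' (f := fun k : ℕ => 1 / beta lam r (-((k:ℤ) + 1)))
    (fun k => hnn _) (fun k => by
      calc 1 / beta lam r (-((k:ℤ) + 1))
          ≤ 1 / (2 * Real.pi) * r ^ (-((1 - lam) * (2 * (((-((k:ℤ) + 1)):ℤ):ℝ) + 1))) :=
            one_div_beta_le₂ hr0 _
        _ = 1 / (2 * Real.pi) * (r ^ (1 - lam) * (r ^ (2 * (1 - lam))) ^ k) := by
            rw [show -((1 - lam) * (2 * (((-((k:ℤ) + 1)):ℤ):ℝ) + 1))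
                = (1 - lam) + 2 * (1 - lam) * (k:ℝ) by push_cast; ring,
              rpow_split hr0])
  -- tail bounds
  have htail1 := geom_bound ⟨hr0, hr1⟩ hl0 (f := fun k : ℕ => 1 / beta lam r ((k:ℤ) + 1))
    (fun k => hnn _) (fun k => by
      calc 1 / beta lam r ((k:ℤ) + 1)
          ≤ 1 / (2 * Real.pi) * r ^ (lam * (2 * ((((k:ℤ) + 1):ℤ):ℝ) + 1)) :=
            one_div_beta_le₁ hr0 _
        _ = 1 / (2 * Real.pi) * (r ^ (3 * lam) * (r ^ (2 * lam)) ^ k) := by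
            rw [show lam * (2 * ((((k:ℤ) + 1):ℤ):ℝ) + 1) = 3 * lam + 2 * lam * (k:ℝ) by
                push_cast; ring,
              rpow_split hr0])
  have htail2 := geom_bound ⟨hr0, hr1⟩ hl0' (f := fun k : ℕ => 1 / beta lam r (-((k:ℤ) + 2)))
    (fun k => hnn _) (fun k => by
      calc 1 / beta lam r (-((k:ℤ) + 2))
          ≤ 1 / (2 * Real.pi) * r ^ (-((1 - lam) * (2 * (((-((k:ℤ) + 2)):ℤ):ℝ) + 1))) :=
            one_div_beta_le₂ hr0 _
        _ = 1 / (2 * Real.pi) * (r ^ (3 * (1 - lam)) * (r ^ (2 * (1 - lam))) ^ k) := by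
            rw [show -((1 - lam) * (2 * (((-((k:ℤ) + 2)):ℤ):ℝ) + 1))
                = 3 * (1 - lam) + 2 * (1 - lam) * (k:ℝ) by push_cast; ring,
              rpow_split hr0])
  have hsig : sig lam 0 r = ∑' n : ℤ, 1 / beta lam r n := by
    unfold sig; exact tsum_congr fun n => by rw [pow_zero]
  have hsplit : sig lam 0 r
      = (∑' k : ℕ, 1 / beta lam r (k : ℤ)) + ∑' k : ℕ, 1 / beta lam r (-((k:ℤ) + 1)) := by
    rw [hsig]
    exact tsum_of_nat_of_neg_add_one hpos.1 hneg.1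
  have hp2 : (∑' k : ℕ, 1 / beta lam r (k : ℤ))
      = 1 / beta lam r 0 + ∑' k : ℕ, 1 / beta lam r ((k:ℤ) + 1) := by
    rw [Summable.tsum_eq_zero_add hpos.1]
    norm_num
  have hn2 : (∑' k : ℕ, 1 / beta lam r (-((k:ℤ) + 1)))
      = 1 / beta lam r (-1) + ∑' k : ℕ, 1 / beta lam r (-((k:ℤ) + 2)) := by
    rw [Summable.tsum_eq_zero_add hneg.1]
    norm_num
    exact tsum_congr fun k => by norm_num; ring_nf
  have hT1nn : 0 ≤ ∑' k : ℕ, 1 / beta lam r ((k:ℤ) + 1) := tsum_nonneg fun k => hnn _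
  have hT2nn : 0 ≤ ∑' k : ℕ, 1 / beta lam r (-((k:ℤ) + 2)) := tsum_nonneg fun k => hnn _
  have hhead := head_eq (lam := lam) (r := r) ⟨hr0, hr1⟩
  constructor
  · rw [hsplit, hp2, hn2, ← hhead]; linarith
  · rw [hsplit, hp2, hn2, ← hhead]; linarith [htail1.2, htail2.2]

lemma tendsto_rpow0 {p : ℝ} (hp : 0 < p) :
    Tendsto (fun r : ℝ => r ^ p) (nhdsWithin 0 (Set.Ioo (0:ℝ) 1)) (nhds 0) := by
  have h : ContinuousAt (fun x : ℝ => x ^ p) 0 :=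
    Real.continuousAt_rpow_const 0 p (Or.inr hp.le)
  have h2 := h.tendsto
  rw [Real.zero_rpow hp.ne'] at h2
  exact h2.mono_left nhdsWithin_le_nhds

/-- `σ₀(r) ~ (1/(2π)) (r^λ + r^{1−λ})/(1+r)`. -/
theorem stmt4 (lam : ℝ) (hlam : lam ∈ Set.Ioo (0 : ℝ) 1) :
    SimRel (sig lam 0)
      (fun r : ℝ => 1 / (2 * Real.pi) * (r ^ lam + r ^ (1 - lam)) / (1 + r)) := by
  obtain ⟨hl0, hl1⟩ := hlam
  have hl0' : (0:ℝ) < 1 - lam := by linarith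
  refine ⟨min (2 * lam) (2 * (1 - lam)), by positivity, fun ε hε => ?_⟩
  obtain ⟨hε0, hε1⟩ := hε
  have hεa : 0 < 2 * lam - ε := by
    have := lt_of_lt_of_le hε1 (min_le_left _ _); linarith
  have hεb : 0 < 2 * (1 - lam) - ε := by
    have := lt_of_lt_of_le hε1 (min_le_right _ _); linarith
  have hpi := Real.pi_pos
  set L := nhdsWithin (0:ℝ) (Set.Ioo (0:ℝ) 1) with hL
  have hmem : ∀ᶠ r in L, r ∈ Set.Ioo (0:ℝ) 1 := eventually_mem_nhdsWithin
  have hev2 : ∀ᶠ r in L, r ^ (2 * lam) ≤ 1/2 :=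
    (tendsto_rpow0 (by linarith)).eventually (eventually_le_nhds (by norm_num))
  have hev3 : ∀ᶠ r in L, r ^ (2 * (1 - lam)) ≤ 1/2 :=
    (tendsto_rpow0 (by linarith)).eventually (eventually_le_nhds (by norm_num))
  apply squeeze_zero' (g := fun r => 4 * r ^ (2 * lam - ε) + 4 * r ^ (2 * (1 - lam) - ε))
  · filter_upwards [hmem] with r hr
    obtain ⟨hr0, hr1⟩ := hr
    have ha : 0 < r ^ lam := Real.rpow_pos_of_pos hr0 _
    have hb : 0 < r ^ (1 - lam) := Real.rpow_pos_of_pos hr0 _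
    have he : 0 < r ^ ε := Real.rpow_pos_of_pos hr0 _
    have hψ : 0 < 1 / (2 * Real.pi) * (r ^ lam + r ^ (1 - lam)) / (1 + r) := by positivity
    exact div_nonneg (sandwich ⟨hl0, hl1⟩ ⟨hr0, hr1⟩).1 (by positivity)
  · filter_upwards [hmem, hev2, hev3] with r hr hs2 ht2
    obtain ⟨hr0, hr1⟩ := hr
    have ha : 0 < r ^ lam := Real.rpow_pos_of_pos hr0 _
    have hb : 0 < r ^ (1 - lam) := Real.rpow_pos_of_pos hr0 _
    have he : 0 < r ^ ε := Real.rpow_pos_of_pos hr0 _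
    have hp : 0 < r ^ (2 * lam) := Real.rpow_pos_of_pos hr0 _
    have hq : 0 < r ^ (2 * (1 - lam)) := Real.rpow_pos_of_pos hr0 _
    have hψ : 0 < 1 / (2 * Real.pi) * (r ^ lam + r ^ (1 - lam)) / (1 + r) := by positivity
    have hψe : 0 < 1 / (2 * Real.pi) * (r ^ lam + r ^ (1 - lam)) / (1 + r) * r ^ ε := by
      positivity
    have hs : 0 < 1 - r ^ (2 * lam) := by linarith
    have ht : 0 < 1 - r ^ (2 * (1 - lam)) := by linarith
    have hsinv : (1 - r ^ (2 * lam))⁻¹ ≤ 2 := by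
      rw [inv_le_comm₀ (by linarith) (by norm_num)]; linarith
    have htinv : (1 - r ^ (2 * (1 - lam)))⁻¹ ≤ 2 := by
      rw [inv_le_comm₀ (by linarith) (by norm_num)]; linarith
    have h3a : r ^ (3 * lam) = r ^ lam * r ^ (2 * lam) := by
      rw [show 3 * lam = lam + 2 * lam by ring, Real.rpow_add hr0]
    have h3b : r ^ (3 * (1 - lam)) = r ^ (1 - lam) * r ^ (2 * (1 - lam)) := by
      rw [show 3 * (1 - lam) = (1 - lam) + 2 * (1 - lam) by ring, Real.rpow_add hr0]
    have hma : r ^ (2 * lam - ε) = r ^ (2 * lam) / r ^ ε := Real.rpow_sub hr0 _ _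
    have hmb : r ^ (2 * (1 - lam) - ε) = r ^ (2 * (1 - lam)) / r ^ ε := Real.rpow_sub hr0 _ _
    have hD := sandwich (lam := lam) (r := r) ⟨hl0, hl1⟩ ⟨hr0, hr1⟩
    have hDle : sig lam 0 r - 1 / (2 * Real.pi) * (r ^ lam + r ^ (1 - lam)) / (1 + r)
        ≤ 1 / Real.pi * (r ^ (3 * lam) + r ^ (3 * (1 - lam))) := by
      have h1 : 1 / (2 * Real.pi) * r ^ (3 * lam) * (1 - r ^ (2 * lam))⁻¹
          ≤ 1 / (2 * Real.pi) * r ^ (3 * lam) * 2 := by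
        have h3 : 0 < r ^ (3 * lam) := Real.rpow_pos_of_pos hr0 _
        have : 0 ≤ 1 / (2 * Real.pi) * r ^ (3 * lam) := by positivity
        exact mul_le_mul_of_nonneg_left hsinv this
      have h2 : 1 / (2 * Real.pi) * r ^ (3 * (1 - lam)) * (1 - r ^ (2 * (1 - lam)))⁻¹
          ≤ 1 / (2 * Real.pi) * r ^ (3 * (1 - lam)) * 2 := by
        have h3 : 0 < r ^ (3 * (1 - lam)) := Real.rpow_pos_of_pos hr0 _
        have : 0 ≤ 1 / (2 * Real.pi) * r ^ (3 * (1 - lam)) := by positivity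
        exact mul_le_mul_of_nonneg_left htinv this
      have := hD.2
      have hππ : Real.pi ≠ 0 := hpi.ne'
      calc sig lam 0 r - 1 / (2 * Real.pi) * (r ^ lam + r ^ (1 - lam)) / (1 + r)
          ≤ 1 / (2 * Real.pi) * r ^ (3 * lam) * 2
            + 1 / (2 * Real.pi) * r ^ (3 * (1 - lam)) * 2 := by linarith
        _ = 1 / Real.pi * (r ^ (3 * lam) + r ^ (3 * (1 - lam))) := by field_simp

    calc (sig lam 0 r - 1 / (2 * Real.pi) * (r ^ lam + r ^ (1 - lam)) / (1 + r))
          / (1 / (2 * Real.pi) * (r ^ lam + r ^ (1 - lam)) / (1 + r) * r ^ ε)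
        ≤ (1 / Real.pi * (r ^ (3 * lam) + r ^ (3 * (1 - lam))))
          / (1 / (2 * Real.pi) * (r ^ lam + r ^ (1 - lam)) / (1 + r) * r ^ ε) :=
          (div_le_div_iff_of_pos_right hψe).2 hDle
      _ ≤ 4 * r ^ (2 * lam - ε) + 4 * r ^ (2 * (1 - lam) - ε) := by
          rw [div_le_iff₀ hψe, h3a, h3b, hma, hmb]
          have hππ : Real.pi ≠ 0 := hpi.ne'
          have h1r : (0:ℝ) < 1 + r := by linarith
          have key : (r ^ lam * r ^ (2 * lam) + r ^ (1 - lam) * r ^ (2 * (1 - lam))) * (1 + r)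
              ≤ 2 * (r ^ (2 * lam) + r ^ (2 * (1 - lam))) * (r ^ lam + r ^ (1 - lam)) := by
            nlinarith [mul_nonneg ha.le hq.le, mul_nonneg hb.le hp.le,
              mul_nonneg (mul_nonneg ha.le hp.le) (sub_nonneg.2 hr1.le),
              mul_nonneg (mul_nonneg hb.le hq.le) (sub_nonneg.2 hr1.le)]
          have hRHS : (4 * (r ^ (2 * lam) / r ^ ε) + 4 * (r ^ (2 * (1 - lam)) / r ^ ε)) *
                (1 / (2 * Real.pi) * (r ^ lam + r ^ (1 - lam)) / (1 + r) * r ^ ε)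
              = 2 * (r ^ (2 * lam) + r ^ (2 * (1 - lam))) * (r ^ lam + r ^ (1 - lam))
                / (Real.pi * (1 + r)) := by
            field_simp
            ring
          rw [hRHS, le_div_iff₀ (by positivity)]
          have hLHS : 1 / Real.pi * (r ^ lam * r ^ (2 * lam)
                + r ^ (1 - lam) * r ^ (2 * (1 - lam))) * (Real.pi * (1 + r))
              = (r ^ lam * r ^ (2 * lam) + r ^ (1 - lam) * r ^ (2 * (1 - lam))) * (1 + r) := by
            field_simp
          rw [hLHS]
          exact key
  · have h1 := (tendsto_rpow0 hεa).const_mul (4:ℝ)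
    have h2 := (tendsto_rpow0 hεb).const_mul (4:ℝ)
    rw [hL]
    have := h1.add h2
    simpa only [mul_zero, add_zero] using this
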